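/- Suppose â_i = 1 − d a_i for i = 1,2,3. Then for every x ∈ ℝ^3 with (x,x) = 1 and 1 − d(x,Ax) > 0 and every K ∈ ℝ^3, the Veselova integral equals the stated combination of Chaplygin integrals: (K, Â_gK) = (K,K) − d(K, A_gK), where Â_g = Â − ĝ^{−2}(E−Â)(x⊗x)(E−Â) with ĝ(x) = (x,Âx)^{1/2}, and A_g = A + d g^{−2} A(x⊗x)A with g(x) = √(1 − d(x,Ax)). -/

import Mathlib

open scoped BigOperators

noncomputable section

abbrev Pt3 : Type := (Fin 3 → ℝ) × (Fin 3 → ℝ)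

/-- Euclidean scalar product on ℝ³ -/
def dot (a b : Fin 3 → ℝ) : ℝ := ∑ i, a i * b i

/-- totally antisymmetric Levi-Civita symbol on `Fin 3` -/
def eps (i j k : Fin 3) : ℝ :=
  ((((i : ℕ) : ℝ) - ((j : ℕ) : ℝ)) * (((j : ℕ) : ℝ) - ((k : ℕ) : ℝ))
    * (((k : ℕ) : ℝ) - ((i : ℕ) : ℝ))) / 2

/-- vector cross product on ℝ³ -/
def cross (a b : Fin 3 → ℝ) : Fin 3 → ℝ := fun i => ∑ j, ∑ k, eps i j k * a j * b k

/-- partial derivative in the coordinate `x i` -/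
def dx (f : Pt3 → ℝ) (i : Fin 3) (z : Pt3) : ℝ := fderiv ℝ f z (Pi.single i 1, 0)

/-- partial derivative in the coordinate `M i` (second group of coordinates) -/
def dM (f : Pt3 → ℝ) (i : Fin 3) (z : Pt3) : ℝ := fderiv ℝ f z (0, Pi.single i 1)

/-- partial derivative of a function of `x` only -/
def dxg (g : (Fin 3 → ℝ) → ℝ) (i : Fin 3) (x : Fin 3 → ℝ) : ℝ := fderiv ℝ g x (Pi.single i 1)

/-- bracket associated with a skew-symmetric structure matrix π with
`π_{x_i x_j} = 0`, `π_{M_i x_j} = Axm i j`, `π_{M_i M_j} = Bmm i j`. -/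
def piBracket (Axm Bmm : Fin 3 → Fin 3 → Pt3 → ℝ) (f h : Pt3 → ℝ) (z : Pt3) : ℝ :=
  ∑ i, ∑ j,
    (dM f i z * Axm i j z * dx h j z - dx f j z * Axm i j z * dM h i z
      + dM f i z * Bmm i j z * dM h j z)

/-- `g(x) = √(1 - d (x, A x))` with `A = diag a` -/
def gC (a : Fin 3 → ℝ) (d : ℝ) (x : Fin 3 → ℝ) : ℝ :=
  Real.sqrt (1 - d * dot x (fun i => a i * x i))

/-- `ĝ(x) = (x, Â x)^{1/2}` -/
def ghat (ah : Fin 3 → ℝ) (x : Fin 3 → ℝ) : ℝ :=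
  Real.sqrt (dot x (fun i => ah i * x i))

/-- `Â_g K = Â K - ĝ⁻² (E - Â)(x ⊗ x)(E - Â) K` -/
def AghatK (ah : Fin 3 → ℝ) (x K : Fin 3 → ℝ) : Fin 3 → ℝ := fun i =>
  ah i * K i
    - (ghat ah x) ⁻¹ ^ 2 * ((1 - ah i) * x i) * (∑ j, (1 - ah j) * x j * K j)

/-- `A_g K = A K + d g⁻² (x, A K) A x` -/
def AgK (a : Fin 3 → ℝ) (d : ℝ) (x K : Fin 3 → ℝ) : Fin 3 → ℝ := fun i =>
  a i * K i + d / (gC a d x) ^ 2 * dot x (fun j => a j * K j) * (a i * x i)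

lemma ghat_eq_gC {a ah : Fin 3 → ℝ} {d : ℝ} (hpar : ∀ i, ah i = 1 - d * a i)
    {x : Fin 3 → ℝ} (hx : dot x x = 1) : ghat ah x = gC a d x := by
  rw [ghat, gC, ← hx]
  congr 1
  simp only [dot, hpar, Fin.sum_univ_three]
  ring

lemma dot_AghatK (ah x K : Fin 3 → ℝ) :
    dot K (AghatK ah x K) =
      dot K (fun i => ah i * K i) - (ghat ah x)⁻¹ ^ 2 * (∑ j, (1 - ah j) * x j * K j) ^ 2 := by
  simp only [dot, AghatK, Fin.sum_univ_three]
  ring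

lemma dot_AgK (a : Fin 3 → ℝ) (d : ℝ) (x K : Fin 3 → ℝ) :
    dot K (AgK a d x K) =
      dot K (fun i => a i * K i) + d / gC a d x ^ 2 * dot x (fun j => a j * K j) ^ 2 := by
  simp only [dot, AgK, Fin.sum_univ_three]
  ring

/-- With `E - Â = d A` and `ĝ = g` on the unit sphere, both sides reduce to
`(K,K) - d (K,AK) - d² g⁻² (x,AK)²`. -/
theorem veselova_integral_via_chaplygin_general (a ah : Fin 3 → ℝ) (d : ℝ)
    (hpar : ∀ i, ah i = 1 - d * a i) (x K : Fin 3 → ℝ)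
    (hx : dot x x = 1) :
    dot K (AghatK ah x K) = dot K K - d * dot K (AgK a d x K) := by
  rw [dot_AghatK, dot_AgK, ghat_eq_gC hpar hx]
  simp only [dot, hpar, Fin.sum_univ_three]
  ring

/-- under `â_i = 1 - d a_i`, on `(x,x) = 1` with `1 - d(x,Ax) > 0`, the
Veselova integral equals the combination of Chaplygin integrals:
`(K, Â_g K) = (K,K) - d (K, A_g K)`. -/
theorem veselova_integral_via_chaplygin (a ah : Fin 3 → ℝ) (d : ℝ)
    (hpar : ∀ i, ah i = 1 - d * a i) (x K : Fin 3 → ℝ)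
    (hx : dot x x = 1) (hU : 1 - d * dot x (fun i => a i * x i) > 0) :
    dot K (AghatK ah x K) = dot K K - d * dot K (AgK a d x K) :=
  veselova_integral_via_chaplygin_general a ah d hpar x K hx
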